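/- arXiv:2505.10498 — 4 statements merged into one kernel-verified Lean document; each statement's English description precedes it below -/
import Mathlib

section
/- Let γ ∈ (0,1) be real, M ≥ 1 an integer, and T ≥ 1 real, and for 0 ≤ m ≤ M set t_m := T^{(1−γ^m)/(1−γ^M)} (so t_0 = 1 and t_M = T). Then for every 1 ≤ m ≤ M one has t_m · (ln(t_{m−1})/t_{m−1})^γ ≤ T^{(1−γ)/(1−γ^M)} · (ln T)^γ. -/
/-! With `D = 1 - γ ^ M` the exponents of the grid satisfy `1 - γ ^ (n + 1) = (1 - γ) + γ (1 - γ ^ n)`,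
so `t (n + 1) = T ^ ((1 - γ) / D) * t n ^ γ`. Hence
`t (n + 1) * (log (t n) / t n) ^ γ = T ^ ((1 - γ) / D) * (log (t n)) ^ γ`, and `t n ≤ T` bounds the logarithm. -/

open Real

lemma one_sub_pow_succ_div (γ D : ℝ) (n : ℕ) :
    (1 - γ ^ (n + 1)) / D = (1 - γ) / D + (1 - γ ^ n) / D * γ := by
  ring

lemma one_sub_pow_div_one_sub_pow_mem_Icc {γ : ℝ} (hγ0 : 0 ≤ γ) (hγ1 : γ ≤ 1) {k M : ℕ}
    (hkM : k ≤ M) : (1 - γ ^ k) / (1 - γ ^ M) ∈ Set.Icc (0 : ℝ) 1 := by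
  have hγk : γ ^ k ≤ 1 := pow_le_one₀ hγ0 hγ1
  have hγM : γ ^ M ≤ γ ^ k := pow_le_pow_of_le_one hγ0 hγ1 hkM
  exact ⟨div_nonneg (by linarith) (by linarith), div_le_one_of_le₀ (by linarith) (by linarith)⟩

lemma rpow_mul_div_rpow {x y : ℝ} (hx : 0 < x) (hy : 0 ≤ y) (γ : ℝ) :
    x ^ γ * (y / x) ^ γ = y ^ γ := by
  rw [← mul_rpow hx.le (div_nonneg hy hx.le), mul_div_cancel₀ y hx.ne']

theorem stmt_2_general (γ T : ℝ) (hγ0 : 0 < γ) (hγ1 : γ < 1) (M : ℕ)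
    (hT : 1 ≤ T) (t : ℕ → ℝ)
    (ht : ∀ m : ℕ, m ≤ M → t m = T ^ ((1 - γ ^ m) / (1 - γ ^ M))) :
    ∀ m : ℕ, 1 ≤ m → m ≤ M →
      t m * (Real.log (t (m - 1)) / t (m - 1)) ^ γ ≤
        T ^ ((1 - γ) / (1 - γ ^ M)) * Real.log T ^ γ := by
  intro m hm1 hmM
  obtain ⟨n, rfl⟩ : ∃ n, m = n + 1 := ⟨m - 1, by omega⟩
  rw [Nat.add_sub_cancel]
  have hT0 : 0 < T := one_pos.trans_le hT
  obtain ⟨ha0, ha1⟩ := one_sub_pow_div_one_sub_pow_mem_Icc hγ0.le hγ1.le (show n ≤ M by omega)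
  have htn : t n = T ^ ((1 - γ ^ n) / (1 - γ ^ M)) := ht n (by omega)
  have htn_pos : 0 < t n := htn ▸ rpow_pos_of_pos hT0 _
  have htn_one : 1 ≤ t n := htn ▸ one_le_rpow hT ha0
  have htn_le : t n ≤ T := htn ▸ rpow_le_self_of_one_le hT ha1
  have hstep : t (n + 1) = T ^ ((1 - γ) / (1 - γ ^ M)) * t n ^ γ := by
    rw [ht (n + 1) hmM, one_sub_pow_succ_div, rpow_add hT0, rpow_mul hT0.le, htn]
  calc t (n + 1) * (log (t n) / t n) ^ γ
      = T ^ ((1 - γ) / (1 - γ ^ M)) * log (t n) ^ γ := by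
        rw [hstep, mul_assoc, rpow_mul_div_rpow htn_pos (log_nonneg htn_one)]
    _ ≤ T ^ ((1 - γ) / (1 - γ ^ M)) * log T ^ γ := by
        gcongr
        exact log_nonneg htn_one

/-- With `T ≥ 1` and `t m := T ^ ((1 - γ^m)/(1 - γ^M))`,
for every `1 ≤ m ≤ M` one has
`t m * (ln (t (m-1)) / t (m-1)) ^ γ ≤ T ^ ((1 - γ)/(1 - γ^M)) * (ln T) ^ γ`. -/
theorem stmt_2 (γ T : ℝ) (hγ0 : 0 < γ) (hγ1 : γ < 1) (M : ℕ) (hM : 1 ≤ M)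
    (hT : 1 ≤ T) (t : ℕ → ℝ)
    (ht : ∀ m : ℕ, m ≤ M → t m = T ^ ((1 - γ ^ m) / (1 - γ ^ M))) :
    ∀ m : ℕ, 1 ≤ m → m ≤ M →
      t m * (Real.log (t (m - 1)) / t (m - 1)) ^ γ ≤
        T ^ ((1 - γ) / (1 - γ ^ M)) * Real.log T ^ γ :=
  stmt_2_general γ T hγ0 hγ1 M hT t ht
end

section
/- Assume in addition d ≥ 2 and d > α + 1. Then for every ε ∈ (0, 1]: ∫_𝒳 g(z)^{−(d−1)}·1{g(z) > ε} dz ≤ (D·(d−1)/(c̲·(d−1−α)))·ε^{α+1−d}, where the integral is with respect to Lebesgue measure on ℝ^d. -/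
open MeasureTheory Set

/-! Bound the Lebesgue integral by `1/c̲` times the `μ`-integral. By the layer-cake formula the
latter is `∫₀^∞ μ{t < h} dt`, where `h = g^{-(d-1)} 1{g > ε}`. The level set `{t < h}` is empty
for `t ≥ ε^{-(d-1)}` and otherwise lies in `{0 < g ≤ t^{-1/(d-1)}}`, whose measure the margin
condition bounds by `D t^{-α/(d-1)}`; this is integrable at `0` exactly because `α < d - 1`. -/

theorem const_mul_setLIntegral_le_lintegral_withDensity {X : Type*} [MeasurableSpace X]
    {ν : Measure X} {f h : X → ENNReal} (hf : Measurable f) (hh : Measurable h) {s : Set X}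
    {c : ENNReal} (hc : ∀ᵐ x ∂ν, x ∈ s → c ≤ f x) :
    c * ∫⁻ x in s, h x ∂ν ≤ ∫⁻ x, h x ∂ν.withDensity f :=
  calc c * ∫⁻ x in s, h x ∂ν = ∫⁻ x in s, c * h x ∂ν := (lintegral_const_mul c hh).symm
    _ ≤ ∫⁻ x in s, f x * h x ∂ν :=
        setLIntegral_mono_ae (hf.mul hh).aemeasurable
          (hc.mono fun _ hx hxs => mul_le_mul_left (hx hxs) _)
    _ ≤ ∫⁻ x, f x * h x ∂ν := setLIntegral_le_lintegral _ _
    _ = ∫⁻ x, h x ∂ν.withDensity f := (lintegral_withDensity_eq_lintegral_mul _ hf hh).symm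

theorem lintegral_Ioc_zero_ofReal_const_mul_rpow {D r T : ℝ} (hD : 0 ≤ D) (hr : -1 < r)
    (hT : 0 ≤ T) :
    ∫⁻ t in Ioc 0 T, ENNReal.ofReal (D * t ^ r) = ENNReal.ofReal (D * (T ^ (r + 1) / (r + 1))) := by
  have hint : IntegrableOn (fun t : ℝ => D * t ^ r) (Ioc 0 T) := by
    have := (intervalIntegral.intervalIntegrable_rpow' (a := 0) (b := T) hr).const_mul D
    rwa [intervalIntegrable_iff, uIoc_of_le hT] at this
  have hnonneg : 0 ≤ᵐ[volume.restrict (Ioc 0 T)] fun t : ℝ => D * t ^ r :=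
    (ae_restrict_iff' measurableSet_Ioc).2 (ae_of_all _ fun t ht => by have := ht.1; positivity)
  rw [← ofReal_integral_eq_lintegral_ofReal hint hnonneg, ← intervalIntegral.integral_of_le hT,
    intervalIntegral.integral_const_mul, integral_rpow (Or.inl hr), Real.zero_rpow (by linarith),
    sub_zero]

theorem lintegral_ofReal_le_of_meas_lt_le_rpow {X : Type*} [MeasurableSpace X] {ν : Measure X}
    {h : X → ℝ} (hh : Measurable h) (h_nonneg : ∀ x, 0 ≤ h x) {D r T : ℝ} (hD : 0 ≤ D)
    (hr : -1 < r) (hT : 0 ≤ T) (h_le : ∀ x, h x ≤ T)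
    (h_tail : ∀ t, 0 < t → ν {x | t < h x} ≤ ENNReal.ofReal (D * t ^ r)) :
    ∫⁻ x, ENNReal.ofReal (h x) ∂ν ≤ ENNReal.ofReal (D * (T ^ (r + 1) / (r + 1))) := by
  have h_tail' : ∀ t ∈ Ioi (0 : ℝ),
      ν {x | t < h x} ≤ (Ioc 0 T).indicator (fun t => ENNReal.ofReal (D * t ^ r)) t := by
    intro t (ht : 0 < t)
    by_cases htT : t ≤ T
    · rw [indicator_of_mem (show t ∈ Ioc 0 T from ⟨ht, htT⟩)]
      exact h_tail t ht
    · have hempty : {x | t < h x} = ∅ :=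
        eq_empty_of_forall_notMem fun x (hx : t < h x) => htT (hx.le.trans (h_le x))
      simp [hempty]
  calc ∫⁻ x, ENNReal.ofReal (h x) ∂ν = ∫⁻ t in Ioi 0, ν {x | t < h x} :=
        lintegral_eq_lintegral_meas_lt ν (ae_of_all _ h_nonneg) hh.aemeasurable
    _ ≤ ∫⁻ t in Ioi 0, (Ioc 0 T).indicator (fun t => ENNReal.ofReal (D * t ^ r)) t :=
        setLIntegral_mono' measurableSet_Ioi h_tail'
    _ = ∫⁻ t in Ioc 0 T, ENNReal.ofReal (D * t ^ r) := by
        rw [lintegral_indicator measurableSet_Ioc, Measure.restrict_restrict measurableSet_Ioc,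
          inter_eq_self_of_subset_left Ioc_subset_Ioi_self]
    _ = ENNReal.ofReal (D * (T ^ (r + 1) / (r + 1))) :=
        lintegral_Ioc_zero_ofReal_const_mul_rpow hD hr hT

section TruncatedNegPower

variable {X : Type*} {g : X → ℝ} {ε m : ℝ}

theorem indicator_rpow_neg_nonneg (hε : 0 < ε) (x : X) :
    0 ≤ {x | ε < g x}.indicator (fun x => g x ^ (-m)) x :=
  indicator_nonneg (fun x (hx : ε < g x) => Real.rpow_nonneg (hε.trans hx).le _) x

theorem indicator_rpow_neg_le (hε : 0 < ε) (hm : 0 ≤ m) (x : X) :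
    {x | ε < g x}.indicator (fun x => g x ^ (-m)) x ≤ ε ^ (-m) := by
  by_cases hx : ε < g x
  · rw [indicator_of_mem (show x ∈ {x | ε < g x} from hx)]
    exact Real.rpow_le_rpow_of_nonpos hε hx.le (neg_nonpos.2 hm)
  · rw [indicator_of_notMem (show x ∉ {x | ε < g x} from hx)]
    positivity

theorem setOf_lt_indicator_rpow_neg_subset (hε : 0 < ε) (hm : 0 < m) {t : ℝ} (ht : 0 < t) :
    {x | t < {x | ε < g x}.indicator (fun x => g x ^ (-m)) x} ⊆
      {x | 0 < g x ∧ g x ≤ t ^ (-m⁻¹)} := by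
  intro x (hx : t < _)
  by_cases hεx : ε < g x
  · have hgx : 0 < g x := hε.trans hεx
    rw [indicator_of_mem (show x ∈ {x | ε < g x} from hεx)] at hx
    refine ⟨hgx, ?_⟩
    calc g x = (g x ^ (-m)) ^ (-m⁻¹) := by
          rw [← Real.rpow_mul hgx.le, neg_mul_neg, mul_inv_cancel₀ hm.ne', Real.rpow_one]
      _ ≤ t ^ (-m⁻¹) := (Real.rpow_lt_rpow_of_neg ht hx (by simpa using hm)).le
  · rw [indicator_of_notMem (show x ∉ {x | ε < g x} from hεx)] at hx
    exact absurd hx ht.not_gt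

end TruncatedNegPower

theorem stmt_11_general (d : ℕ) (c D α : ℝ) (hc : 0 < c) (hD : 0 < D)
    (hα0 : 0 < α) (hdα : α + 1 < (d : ℝ))
    (𝒳 : Set (EuclideanSpace ℝ (Fin d)))
    (μ : Measure (EuclideanSpace ℝ (Fin d)))
    (p : EuclideanSpace ℝ (Fin d) → ℝ) (hp_meas : Measurable p)
    (hμp : μ = volume.withDensity fun x => ENNReal.ofReal (p x))
    (hpc : ∀ᵐ x ∂volume, x ∈ 𝒳 → c ≤ p x)
    (g : EuclideanSpace ℝ (Fin d) → ℝ) (hg_meas : Measurable g)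
    (hmargin : ∀ δ : ℝ, 0 < δ → μ {x | 0 < g x ∧ g x ≤ δ} ≤ ENNReal.ofReal (D * δ ^ α))
    (ε : ℝ) (hε0 : 0 < ε) :
    ∫ z in 𝒳, Set.indicator {z | ε < g z} (fun z => g z ^ (-((d : ℝ) - 1))) z ≤
      D * ((d : ℝ) - 1) / (c * ((d : ℝ) - 1 - α)) * ε ^ (α + 1 - (d : ℝ)) := by
  set m : ℝ := (d : ℝ) - 1
  have hm : 0 < m := by linarith
  have hαm : 0 < m - α := by linarith
  set h := fun z => {z | ε < g z}.indicator (fun z => g z ^ (-m)) z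
  have hh : Measurable h :=
    (hg_meas.pow_const _).indicator (measurableSet_lt measurable_const hg_meas)
  have h_tail (t : ℝ) (ht : 0 < t) : μ {x | t < h x} ≤ ENNReal.ofReal (D * t ^ (-(α / m))) := by
    refine (measure_mono (setOf_lt_indicator_rpow_neg_subset hε0 hm ht)).trans ?_
    refine (hmargin _ (by positivity)).trans_eq ?_
    rw [← Real.rpow_mul ht.le, neg_mul, inv_mul_eq_div]
  have hμ_bound := lintegral_ofReal_le_of_meas_lt_le_rpow hh (indicator_rpow_neg_nonneg hε0) hD.le
    (by rw [neg_lt_neg_iff, div_lt_one hm]; linarith) (by positivity)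
    (indicator_rpow_neg_le hε0 hm.le) h_tail
  have h_vol : ENNReal.ofReal c * ∫⁻ z in 𝒳, ENNReal.ofReal (h z) ≤
      ∫⁻ z, ENNReal.ofReal (h z) ∂μ :=
    hμp ▸ const_mul_setLIntegral_le_lintegral_withDensity hp_meas.ennreal_ofReal
      hh.ennreal_ofReal (hpc.mono fun x hx hx𝒳 => ENNReal.ofReal_le_ofReal (hx hx𝒳))
  have h_const : D * ((ε ^ (-m)) ^ (-(α / m) + 1) / (-(α / m) + 1)) =
      c * (D * m / (c * (m - α)) * ε ^ (α + 1 - (d : ℝ))) := by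
    rw [← Real.rpow_mul hε0.le, show -m * (-(α / m) + 1) = α + 1 - d by field_simp; ring]
    field_simp
    rw [neg_add_eq_sub, div_self hαm.ne']
  rw [integral_eq_lintegral_of_nonneg_ae (ae_of_all _ (indicator_rpow_neg_nonneg hε0))
    hh.aestronglyMeasurable]
  refine ENNReal.toReal_le_of_le_ofReal (by positivity) ?_
  rw [← ENNReal.mul_le_mul_iff_right (ENNReal.ofReal_pos.2 hc).ne' ENNReal.ofReal_ne_top,
    ← ENNReal.ofReal_mul hc.le, ← h_const]
  exact h_vol.trans hμ_bound

/-- Case `d > α + 1` of Lemma 8. Under the density lower bound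
`p ≥ c̲` a.e. on `𝒳` (where `μ = p · Leb` is a probability measure with `μ(𝒳) = 1`)
and the margin condition `μ({0 < g ≤ δ}) ≤ D δ^α`, for every `ε ∈ (0,1]`:
`∫_𝒳 g(z)^{-(d-1)} 1{g(z) > ε} dz ≤ (D(d-1)/(c̲(d-1-α))) ε^{α+1-d}`. -/
theorem stmt_11 (d : ℕ) (hd : 2 ≤ d) (c D α : ℝ) (hc : 0 < c) (hD : 0 < D)
    (hα0 : 0 < α) (hαd : α ≤ (d : ℝ)) (hdα : α + 1 < (d : ℝ))
    (𝒳 : Set (EuclideanSpace ℝ (Fin d))) (h𝒳 : MeasurableSet 𝒳)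
    (μ : Measure (EuclideanSpace ℝ (Fin d))) [IsProbabilityMeasure μ]
    (hμ𝒳 : μ 𝒳 = 1)
    (p : EuclideanSpace ℝ (Fin d) → ℝ) (hp_meas : Measurable p) (hp0 : ∀ x, 0 ≤ p x)
    (hμp : μ = volume.withDensity fun x => ENNReal.ofReal (p x))
    (hpc : ∀ᵐ x ∂volume, x ∈ 𝒳 → c ≤ p x)
    (g : EuclideanSpace ℝ (Fin d) → ℝ) (hg_meas : Measurable g) (hg0 : ∀ x, 0 ≤ g x)
    (hmargin : ∀ δ : ℝ, 0 < δ → μ {x | 0 < g x ∧ g x ≤ δ} ≤ ENNReal.ofReal (D * δ ^ α))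
    (ε : ℝ) (hε0 : 0 < ε) (hε1 : ε ≤ 1) :
    ∫ z in 𝒳, Set.indicator {z | ε < g z} (fun z => g z ^ (-((d : ℝ) - 1))) z ≤
      D * ((d : ℝ) - 1) / (c * ((d : ℝ) - 1 - α)) * ε ^ (α + 1 - (d : ℝ)) :=
  stmt_11_general d c D α hc hD hα0 hdα 𝒳 μ p hp_meas hμp hpc g hg_meas hmargin ε hε0
end

section
/- Assume in addition d ≥ 2 and α + 1 > d (i.e. d − 1 < α ≤ d). Then for every ε ∈ (0, 1): ∫_𝒳 g(z)^{−(d−1)}·1{g(z) > ε} dz ≤ (1/c̲)·(1 + D·(d−1)/(α+1−d)), where the integral is with respect to Lebesgue measure on ℝ^d. -/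
open MeasureTheory Set

/-!
Since `p ≥ c̲` on `𝒳`, the Lebesgue integral over `𝒳` is at most `1/c̲` times the `μ`-integral.
The truncated power `f = g^{-(d-1)} 1{g > ε}` satisfies `{f > t} ⊆ {0 < g ≤ t^{-1/(d-1)}}`, so by
the margin condition its tail is `μ{f > t} ≤ D t^{-α/(d-1)}`, uniformly in `ε`. The layer-cake
formula, with the trivial bound `1` on `(0, 1]`, then gives `∫ f dμ ≤ 1 + D (d-1)/(α+1-d)`;
the exponent `α/(d-1)` exceeds `1` precisely because `α + 1 > d`.
-/

lemma ofReal_mul_setLIntegral_le_setLIntegral_withDensity {X : Type*} [MeasurableSpace X]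
    {ν : Measure X} {s : Set X} (hs : MeasurableSet s) {p : X → ℝ} (hp : Measurable p) {c : ℝ}
    (hpc : ∀ᵐ x ∂ν, x ∈ s → c ≤ p x) {f : X → ENNReal} (hf : Measurable f) :
    ENNReal.ofReal c * ∫⁻ x in s, f x ∂ν ≤
      ∫⁻ x in s, f x ∂ν.withDensity fun x => ENNReal.ofReal (p x) := by
  rw [setLIntegral_withDensity_eq_setLIntegral_mul _ hp.ennreal_ofReal hf hs,
    ← lintegral_const_mul _ hf]
  refine lintegral_mono_ae ?_
  filter_upwards [(ae_restrict_iff' hs).2 hpc] with x hx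
  exact mul_le_mul_left (ENNReal.ofReal_le_ofReal hx) _

lemma setIntegral_le_of_lintegral_withDensity_le {X : Type*} [MeasurableSpace X]
    {ν : Measure X} {s : Set X} (hs : MeasurableSet s) {p : X → ℝ} (hp : Measurable p) {c : ℝ}
    (hc : 0 < c) (hpc : ∀ᵐ x ∂ν, x ∈ s → c ≤ p x) {f : X → ℝ} (hf0 : ∀ x, 0 ≤ f x)
    (hf : Measurable f) {K : ℝ} (hK0 : 0 ≤ K)
    (hK : ∫⁻ x, ENNReal.ofReal (f x) ∂ν.withDensity (fun x => ENNReal.ofReal (p x)) ≤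
      ENNReal.ofReal K) :
    ∫ x in s, f x ∂ν ≤ 1 / c * K := by
  have hmul : ENNReal.ofReal c * ∫⁻ x in s, ENNReal.ofReal (f x) ∂ν ≤ ENNReal.ofReal K :=
    (ofReal_mul_setLIntegral_le_setLIntegral_withDensity hs hp hpc hf.ennreal_ofReal).trans
      ((setLIntegral_le_lintegral _ _).trans hK)
  have hlint : ∫⁻ x in s, ENNReal.ofReal (f x) ∂ν ≤ ENNReal.ofReal (1 / c * K) := by
    rw [ENNReal.ofReal_mul (by positivity), one_div, ENNReal.ofReal_inv_of_pos hc,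
      ← ENNReal.div_eq_inv_mul, ENNReal.le_div_iff_mul_le (Or.inl (ENNReal.ofReal_pos.2 hc).ne')
        (Or.inl ENNReal.ofReal_ne_top), mul_comm]
    exact hmul
  rw [integral_eq_lintegral_of_nonneg_ae (.of_forall hf0) hf.aestronglyMeasurable]
  exact ENNReal.toReal_le_of_le_ofReal (by positivity) hlint

lemma lintegral_Ioi_one_ofReal_mul_rpow_neg {D r : ℝ} (hD : 0 ≤ D) (hr : 1 < r) :
    ∫⁻ t in Ioi (1 : ℝ), ENNReal.ofReal (D * t ^ (-r)) = ENNReal.ofReal (D / (r - 1)) := by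
  have hr' : -r < -1 := neg_lt_neg hr
  have hnonneg : 0 ≤ᵐ[volume.restrict (Ioi (1 : ℝ))] fun t => D * t ^ (-r) :=
    (ae_restrict_iff' measurableSet_Ioi).2 <| .of_forall fun t ht =>
      mul_nonneg hD (Real.rpow_nonneg (zero_le_one.trans (le_of_lt ht)) _)
  rw [← ofReal_integral_eq_lintegral_ofReal
    ((integrableOn_Ioi_rpow_of_lt hr' one_pos).const_mul D) hnonneg, integral_const_mul,
    integral_Ioi_rpow_of_lt hr' one_pos, Real.one_rpow]
  rw [show -r + 1 = -(r - 1) by ring, neg_div_neg_eq, mul_one_div]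

lemma lintegral_ofReal_le_of_meas_lt_le_rpow_neg {Ω : Type*} [MeasurableSpace Ω]
    {μ : Measure Ω} [IsProbabilityMeasure μ] {f : Ω → ℝ} (hf0 : 0 ≤ᵐ[μ] f)
    (hf : AEMeasurable f μ) {D r : ℝ} (hD : 0 ≤ D) (hr : 1 < r)
    (htail : ∀ t, 1 < t → μ {x | t < f x} ≤ ENNReal.ofReal (D * t ^ (-r))) :
    ∫⁻ x, ENNReal.ofReal (f x) ∂μ ≤ ENNReal.ofReal (1 + D / (r - 1)) := by
  rw [lintegral_eq_lintegral_meas_lt μ hf0 hf, ← Ioc_union_Ioi_eq_Ioi zero_le_one,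
    lintegral_union measurableSet_Ioi Ioc_disjoint_Ioi_same,
    ENNReal.ofReal_add zero_le_one (div_nonneg hD (by linarith)), ENNReal.ofReal_one]
  gcongr
  · calc ∫⁻ t in Ioc (0 : ℝ) 1, μ {x | t < f x}
        ≤ ∫⁻ _ in Ioc (0 : ℝ) 1, 1 := lintegral_mono fun _ => prob_le_one
      _ = 1 := by simp
  · calc ∫⁻ t in Ioi (1 : ℝ), μ {x | t < f x}
        ≤ ∫⁻ t in Ioi (1 : ℝ), ENNReal.ofReal (D * t ^ (-r)) :=
          setLIntegral_mono (by fun_prop) htail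
      _ = ENNReal.ofReal (D / (r - 1)) := lintegral_Ioi_one_ofReal_mul_rpow_neg hD hr

lemma setOf_lt_rpow_neg_subset {X : Type*} {g : X → ℝ} (hg0 : ∀ x, 0 ≤ g x) {β t : ℝ}
    (hβ : 0 < β) (ht : 0 < t) :
    {x | t < g x ^ (-β)} ⊆ {x | 0 < g x ∧ g x ≤ t ^ (-β)⁻¹} := by
  intro x hx
  have hgx : 0 < g x := by
    refine (hg0 x).lt_of_ne fun h => ?_
    rw [mem_ofPred_eq, ← h, Real.zero_rpow (neg_ne_zero.2 hβ.ne')] at hx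
    exact ht.not_gt hx
  exact ⟨hgx, (Real.le_rpow_inv_iff_of_neg hgx ht (neg_neg_of_pos hβ)).2 hx.le⟩

lemma measure_lt_rpow_neg_le_of_margin {X : Type*} [MeasurableSpace X] {μ : Measure X}
    {g : X → ℝ} (hg0 : ∀ x, 0 ≤ g x) {D α β : ℝ} (hβ : 0 < β)
    (hmargin : ∀ δ : ℝ, 0 < δ → μ {x | 0 < g x ∧ g x ≤ δ} ≤ ENNReal.ofReal (D * δ ^ α))
    {t : ℝ} (ht : 0 < t) :
    μ {x | t < g x ^ (-β)} ≤ ENNReal.ofReal (D * t ^ (-(α / β))) := by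
  calc μ {x | t < g x ^ (-β)} ≤ μ {x | 0 < g x ∧ g x ≤ t ^ (-β)⁻¹} :=
        measure_mono (setOf_lt_rpow_neg_subset hg0 hβ ht)
    _ ≤ ENNReal.ofReal (D * (t ^ (-β)⁻¹) ^ α) := hmargin _ (Real.rpow_pos_of_pos ht _)
    _ = ENNReal.ofReal (D * t ^ (-(α / β))) := by
        rw [← Real.rpow_mul ht.le, inv_neg, neg_mul, inv_mul_eq_div]

theorem stmt_13_general (d : ℕ) (hd : 2 ≤ d) (c D α : ℝ) (hc : 0 < c) (hD : 0 < D)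
    (hdα : (d : ℝ) < α + 1)
    (𝒳 : Set (EuclideanSpace ℝ (Fin d))) (h𝒳 : MeasurableSet 𝒳)
    (μ : Measure (EuclideanSpace ℝ (Fin d))) [IsProbabilityMeasure μ]
    (p : EuclideanSpace ℝ (Fin d) → ℝ) (hp_meas : Measurable p)
    (hμp : μ = volume.withDensity fun x => ENNReal.ofReal (p x))
    (hpc : ∀ᵐ x ∂volume, x ∈ 𝒳 → c ≤ p x)
    (g : EuclideanSpace ℝ (Fin d) → ℝ) (hg_meas : Measurable g) (hg0 : ∀ x, 0 ≤ g x)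
    (hmargin : ∀ δ : ℝ, 0 < δ → μ {x | 0 < g x ∧ g x ≤ δ} ≤ ENNReal.ofReal (D * δ ^ α))
    (ε : ℝ) :
    ∫ z in 𝒳, Set.indicator {z | ε < g z} (fun z => g z ^ (-((d : ℝ) - 1))) z ≤
      1 / c * (1 + D * ((d : ℝ) - 1) / (α + 1 - (d : ℝ))) := by
  set β : ℝ := (d : ℝ) - 1
  have hβ : 0 < β := by
    have : (2 : ℝ) ≤ d := by exact_mod_cast hd
    linarith
  have hr : 1 < α / β := (one_lt_div hβ).2 (by linarith)
  set f := fun z => Set.indicator {z | ε < g z} (fun z => g z ^ (-β)) z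
  have hf0 : ∀ z, 0 ≤ f z := fun z => indicator_nonneg (fun z _ => Real.rpow_nonneg (hg0 z) _) z
  have hf : Measurable f :=
    (hg_meas.pow_const _).indicator (measurableSet_lt measurable_const hg_meas)
  have htail : ∀ t, 1 < t → μ {z | t < f z} ≤ ENNReal.ofReal (D * t ^ (-(α / β))) :=
    fun t ht => (measure_mono fun z hz => hz.trans_le
        (indicator_le_self' (fun z _ => Real.rpow_nonneg (hg0 z) _) z)).trans
      (measure_lt_rpow_neg_le_of_margin hg0 hβ hmargin (one_pos.trans ht))
  have hlayer := lintegral_ofReal_le_of_meas_lt_le_rpow_neg (.of_forall hf0) hf.aemeasurable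
    hD.le hr htail
  rw [hμp] at hlayer
  convert setIntegral_le_of_lintegral_withDensity_le h𝒳 hp_meas hc hpc hf0 hf
    (by positivity) hlayer using 3
  rw [div_sub_one hβ.ne', div_div_eq_mul_div]
  ring

/-- Case `α + 1 > d` (i.e. `d - 1 < α ≤ d`) of Lemma 8. Under the
density lower bound `p ≥ c̲` a.e. on `𝒳` (where `μ = p · Leb` is a probability measure
with `μ(𝒳) = 1`) and the margin condition `μ({0 < g ≤ δ}) ≤ D δ^α`, for every
`ε ∈ (0,1)`: `∫_𝒳 g(z)^{-(d-1)} 1{g(z) > ε} dz ≤ (1/c̲)(1 + D(d-1)/(α+1-d))`. -/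
theorem stmt_13 (d : ℕ) (hd : 2 ≤ d) (c D α : ℝ) (hc : 0 < c) (hD : 0 < D)
    (hα0 : 0 < α) (hαd : α ≤ (d : ℝ)) (hdα : (d : ℝ) < α + 1)
    (𝒳 : Set (EuclideanSpace ℝ (Fin d))) (h𝒳 : MeasurableSet 𝒳)
    (μ : Measure (EuclideanSpace ℝ (Fin d))) [IsProbabilityMeasure μ]
    (hμ𝒳 : μ 𝒳 = 1)
    (p : EuclideanSpace ℝ (Fin d) → ℝ) (hp_meas : Measurable p) (hp0 : ∀ x, 0 ≤ p x)
    (hμp : μ = volume.withDensity fun x => ENNReal.ofReal (p x))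
    (hpc : ∀ᵐ x ∂volume, x ∈ 𝒳 → c ≤ p x)
    (g : EuclideanSpace ℝ (Fin d) → ℝ) (hg_meas : Measurable g) (hg0 : ∀ x, 0 ≤ g x)
    (hmargin : ∀ δ : ℝ, 0 < δ → μ {x | 0 < g x ∧ g x ≤ δ} ≤ ENNReal.ofReal (D * δ ^ α))
    (ε : ℝ) (hε0 : 0 < ε) (hε1 : ε < 1) :
    ∫ z in 𝒳, Set.indicator {z | ε < g z} (fun z => g z ^ (-((d : ℝ) - 1))) z ≤
      1 / c * (1 + D * ((d : ℝ) - 1) / (α + 1 - (d : ℝ))) :=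
  stmt_13_general d hd c D α hc hD hdα 𝒳 h𝒳 μ p hp_meas hμp hpc g hg_meas hg0 hmargin ε
end

section
/- For every ε > 0: ∫_𝒳 g(z)^{−(d+1)}·1{g(z) > ε} dz ≤ (D·(d+1)/(c̲·(d+1−α)))·ε^{α−d−1}, where the integral is with respect to Lebesgue measure on ℝ^d. -/
/-! On `{g > ε}` the integrand `g^{-(d+1)}` is at most `ε^{-(d+1)}`, and its superlevel set
`{g^{-(d+1)} > t}` lies in `{0 < g ≤ t^{-1/(d+1)}}`, whose `μ`-mass is at most `D t^{-α/(d+1)}` by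
the margin condition. The layer-cake formula turns this into
`∫ g^{-(d+1)} 1{g > ε} dμ ≤ D ∫_0^{ε^{-(d+1)}} t^{-α/(d+1)} dt`, which is finite because `α < d+1`;
the density bound `p ≥ c̲` on `𝒳` passes from `μ` to Lebesgue measure at the cost of a factor
`1/c̲`. -/

open MeasureTheory Set
open scoped ENNReal

variable {X : Type*}

theorem mul_setLIntegral_le_lintegral_withDensity [MeasurableSpace X] {ν : Measure X}
    {ρ f : X → ℝ≥0∞} {s : Set X} {c : ℝ≥0∞} (hρ : AEMeasurable ρ ν) (hf : AEMeasurable f ν)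
    (hc : ∀ᵐ x ∂ν.restrict s, c ≤ ρ x) :
    c * ∫⁻ x in s, f x ∂ν ≤ ∫⁻ x, f x ∂ν.withDensity ρ :=
  calc c * ∫⁻ x in s, f x ∂ν = ∫⁻ x in s, c * f x ∂ν :=
        (lintegral_const_mul'' c hf.restrict).symm
    _ ≤ ∫⁻ x in s, ρ x * f x ∂ν := lintegral_mono_ae (hc.mono fun x hx => by gcongr)
    _ ≤ ∫⁻ x, ρ x * f x ∂ν := setLIntegral_le_lintegral _ _
    _ = ∫⁻ x, f x ∂ν.withDensity ρ := (lintegral_withDensity_eq_lintegral_mul₀ hρ hf).symm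

theorem lintegral_ofReal_le_of_meas_lt_le_rpow_s14 [MeasurableSpace X] {μ : Measure X} {F : X → ℝ}
    {D T β : ℝ}
    (hF0 : ∀ x, 0 ≤ F x) (hF : AEMeasurable F μ) (hFT : ∀ x, F x ≤ T) (hT : 0 ≤ T)
    (hD : 0 ≤ D) (hβ : β < 1)
    (hlevel : ∀ t ∈ Ioc 0 T, μ {x | t < F x} ≤ ENNReal.ofReal (D * t ^ (-β))) :
    ∫⁻ x, ENNReal.ofReal (F x) ∂μ ≤ ENNReal.ofReal (D * T ^ (1 - β) / (1 - β)) := by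
  have hlevel' : ∀ t ∈ Ioi (0 : ℝ), μ {x | t < F x} ≤
      (Ioc 0 T).indicator (fun t => ENNReal.ofReal (D * t ^ (-β))) t := by
    intro t ht
    by_cases htT : t ≤ T
    · rw [indicator_of_mem (show t ∈ Ioc 0 T from ⟨ht, htT⟩)]
      exact hlevel t ⟨ht, htT⟩
    · have hempty : {x | t < F x} = ∅ :=
        eq_empty_of_forall_notMem fun x hx => htT ((le_of_lt hx).trans (hFT x))
      rw [hempty, measure_empty]
      exact zero_le
  have hint : IntegrableOn (fun t : ℝ => D * t ^ (-β)) (Ioc 0 T) :=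
    (intervalIntegrable_iff_integrableOn_Ioc_of_le hT).1
      ((intervalIntegral.intervalIntegrable_rpow' (by linarith)).const_mul D)
  calc ∫⁻ x, ENNReal.ofReal (F x) ∂μ = ∫⁻ t in Ioi 0, μ {x | t < F x} :=
        lintegral_eq_lintegral_meas_lt μ (ae_of_all _ hF0) hF
    _ ≤ ∫⁻ t in Ioi 0, (Ioc 0 T).indicator (fun t => ENNReal.ofReal (D * t ^ (-β))) t :=
        setLIntegral_mono ((by fun_prop : Measurable _).indicator measurableSet_Ioc) hlevel'
    _ = ∫⁻ t in Ioc 0 T, ENNReal.ofReal (D * t ^ (-β)) := by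
        rw [lintegral_indicator measurableSet_Ioc, Measure.restrict_restrict measurableSet_Ioc,
          inter_eq_left.2 Ioc_subset_Ioi_self]
    _ = ENNReal.ofReal (∫ t in Ioc 0 T, D * t ^ (-β)) :=
        (ofReal_integral_eq_lintegral_ofReal hint
          ((ae_restrict_iff' measurableSet_Ioc).2 (ae_of_all _ fun t ht => by
            have := ht.1; positivity))).symm
    _ = ENNReal.ofReal (D * T ^ (1 - β) / (1 - β)) := by
        rw [← intervalIntegral.integral_of_le hT, intervalIntegral.integral_const_mul,
          integral_rpow (Or.inl (by linarith)), Real.zero_rpow (by linarith)]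
        ring_nf

section

variable {g : X → ℝ} {ε n : ℝ}

theorem indicator_rpow_nonneg (hε : 0 < ε) (x : X) :
    0 ≤ {x | ε < g x}.indicator (fun x => g x ^ (-n)) x :=
  indicator_nonneg (fun _ hx => Real.rpow_nonneg (hε.trans hx).le _) x

theorem indicator_rpow_le (hε : 0 < ε) (hn : 0 ≤ n) (x : X) :
    {x | ε < g x}.indicator (fun x => g x ^ (-n)) x ≤ ε ^ (-n) := by
  by_cases hx : ε < g x
  · rw [indicator_of_mem (show x ∈ {x | ε < g x} from hx)]
    exact Real.rpow_le_rpow_of_nonpos hε hx.le (by linarith)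
  · rw [indicator_of_notMem (show x ∉ {x | ε < g x} from hx)]
    positivity

theorem setOf_lt_indicator_rpow_subset (hε : 0 < ε) (hn : 0 < n) {t : ℝ} (ht : 0 < t) :
    {x | t < {x | ε < g x}.indicator (fun x => g x ^ (-n)) x} ⊆
      {x | 0 < g x ∧ g x ≤ t ^ (-n)⁻¹} := by
  intro x hx
  by_cases hxε : ε < g x
  · rw [mem_ofPred_eq, indicator_of_mem (show x ∈ {x | ε < g x} from hxε)] at hx
    have hg : 0 < g x := hε.trans hxε
    refine ⟨hg, ?_⟩
    calc g x = (g x ^ (-n)) ^ (-n)⁻¹ := (Real.rpow_rpow_inv hg.le (by linarith)).symm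
      _ ≤ t ^ (-n)⁻¹ := Real.rpow_le_rpow_of_nonpos ht hx.le (by simp [hn.le])
  · rw [mem_ofPred_eq, indicator_of_notMem (show x ∉ {x | ε < g x} from hxε)] at hx
    exact absurd hx ht.not_gt

theorem measurable_indicator_rpow [MeasurableSpace X] (hg : Measurable g) :
    Measurable fun x => {x | ε < g x}.indicator (fun x => g x ^ (-n)) x :=
  (by fun_prop : Measurable _).indicator (measurableSet_lt measurable_const hg)

theorem lintegral_indicator_rpow_le_of_margin [MeasurableSpace X] {μ : Measure X}
    (hg : Measurable g) {D α : ℝ} (hD : 0 ≤ D) (hn : 0 < n) (hαn : α < n) (hε : 0 < ε)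
    (hmargin : ∀ δ : ℝ, 0 < δ → μ {x | 0 < g x ∧ g x ≤ δ} ≤ ENNReal.ofReal (D * δ ^ α)) :
    ∫⁻ x, ENNReal.ofReal ({x | ε < g x}.indicator (fun x => g x ^ (-n)) x) ∂μ ≤
      ENNReal.ofReal (D * n / (n - α) * ε ^ (α - n)) := by
  have hlevel : ∀ t ∈ Ioc 0 (ε ^ (-n)),
      μ {x | t < {x | ε < g x}.indicator (fun x => g x ^ (-n)) x} ≤
        ENNReal.ofReal (D * t ^ (-(α / n))) := by
    rintro t ⟨ht, -⟩
    calc _ ≤ μ {x | 0 < g x ∧ g x ≤ t ^ (-n)⁻¹} :=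
          measure_mono (setOf_lt_indicator_rpow_subset hε hn ht)
      _ ≤ ENNReal.ofReal (D * (t ^ (-n)⁻¹) ^ α) := hmargin _ (by positivity)
      _ = ENNReal.ofReal (D * t ^ (-(α / n))) := by
          rw [← Real.rpow_mul ht.le]
          congr 3
          ring
  have hβ : α / n < 1 := (div_lt_one hn).2 hαn
  refine (lintegral_ofReal_le_of_meas_lt_le_rpow_s14 (indicator_rpow_nonneg hε)
    (measurable_indicator_rpow hg).aemeasurable
    (indicator_rpow_le hε hn.le) (by positivity) hD hβ hlevel).trans_eq ?_
  congr 1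
  rw [← Real.rpow_mul hε.le]
  field_simp
  ring_nf

end

theorem stmt_14_general (d : ℕ) (c D α : ℝ) (hc : 0 < c) (hD : 0 < D)
    (hαd : α ≤ (d : ℝ))
    (𝒳 : Set (EuclideanSpace ℝ (Fin d)))
    (μ : Measure (EuclideanSpace ℝ (Fin d)))
    (p : EuclideanSpace ℝ (Fin d) → ℝ) (hp_meas : Measurable p)
    (hμp : μ = volume.withDensity fun x => ENNReal.ofReal (p x))
    (hpc : ∀ᵐ x ∂volume, x ∈ 𝒳 → c ≤ p x)
    (g : EuclideanSpace ℝ (Fin d) → ℝ) (hg_meas : Measurable g)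
    (hmargin : ∀ δ : ℝ, 0 < δ → μ {x | 0 < g x ∧ g x ≤ δ} ≤ ENNReal.ofReal (D * δ ^ α))
    (ε : ℝ) (hε0 : 0 < ε) :
    ∫ z in 𝒳, Set.indicator {z | ε < g z} (fun z => g z ^ (-((d : ℝ) + 1))) z ≤
      D * ((d : ℝ) + 1) / (c * ((d : ℝ) + 1 - α)) * ε ^ (α - (d : ℝ) - 1) := by
  set n : ℝ := (d : ℝ) + 1 with hn
  have hαn : 0 < n - α := by linarith
  set F := fun z => {z | ε < g z}.indicator (fun z => g z ^ (-n)) z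
  have hF : Measurable F := measurable_indicator_rpow hg_meas
  have hpc' : ∀ᵐ x ∂volume.restrict 𝒳, ENNReal.ofReal c ≤ ENNReal.ofReal (p x) :=
    (ae_restrict_iff (measurableSet_le measurable_const hp_meas.ennreal_ofReal)).2
      (hpc.mono fun x hx hx𝒳 => ENNReal.ofReal_le_ofReal (hx hx𝒳))
  have hbound : ENNReal.ofReal c * ∫⁻ z in 𝒳, ENNReal.ofReal (F z) ≤
      ENNReal.ofReal (D * n / (n - α) * ε ^ (α - n)) := by
    refine le_trans ?_ (lintegral_indicator_rpow_le_of_margin hg_meas hD.le (by positivity)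
      (by linarith) hε0 hmargin)
    rw [hμp]
    exact mul_setLIntegral_le_lintegral_withDensity hp_meas.ennreal_ofReal.aemeasurable
      hF.ennreal_ofReal.aemeasurable hpc'
  have hbound' := ENNReal.toReal_le_of_le_ofReal (by positivity) hbound
  rw [ENNReal.toReal_mul, ENNReal.toReal_ofReal hc.le] at hbound'
  rw [integral_eq_lintegral_of_nonneg_ae (ae_of_all _ (indicator_rpow_nonneg hε0))
    hF.aestronglyMeasurable]
  calc _ = c * (∫⁻ z in 𝒳, ENNReal.ofReal (F z)).toReal / c :=
        (mul_div_cancel_left₀ _ hc.ne').symm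
    _ ≤ D * n / (n - α) * ε ^ (α - n) / c := by gcongr
    _ = _ := by
      rw [show α - (d : ℝ) - 1 = α - n by ring]
      field_simp

/-- Exponent-`(d+1)` analogue of the dominating case of Lemma 8.
Under the density lower bound `p ≥ c̲` a.e. on `𝒳` (where `μ = p · Leb` is a probability
measure with `μ(𝒳) = 1`) and the margin condition `μ({0 < g ≤ δ}) ≤ D δ^α`, for every
`ε > 0`: `∫_𝒳 g(z)^{-(d+1)} 1{g(z) > ε} dz ≤ (D(d+1)/(c̲(d+1-α))) ε^{α-d-1}`. -/
theorem stmt_14 (d : ℕ) (hd : 1 ≤ d) (c D α : ℝ) (hc : 0 < c) (hD : 0 < D)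
    (hα0 : 0 < α) (hαd : α ≤ (d : ℝ))
    (𝒳 : Set (EuclideanSpace ℝ (Fin d))) (h𝒳 : MeasurableSet 𝒳)
    (μ : Measure (EuclideanSpace ℝ (Fin d))) [IsProbabilityMeasure μ]
    (hμ𝒳 : μ 𝒳 = 1)
    (p : EuclideanSpace ℝ (Fin d) → ℝ) (hp_meas : Measurable p) (hp0 : ∀ x, 0 ≤ p x)
    (hμp : μ = volume.withDensity fun x => ENNReal.ofReal (p x))
    (hpc : ∀ᵐ x ∂volume, x ∈ 𝒳 → c ≤ p x)
    (g : EuclideanSpace ℝ (Fin d) → ℝ) (hg_meas : Measurable g) (hg0 : ∀ x, 0 ≤ g x)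
    (hmargin : ∀ δ : ℝ, 0 < δ → μ {x | 0 < g x ∧ g x ≤ δ} ≤ ENNReal.ofReal (D * δ ^ α))
    (ε : ℝ) (hε0 : 0 < ε) :
    ∫ z in 𝒳, Set.indicator {z | ε < g z} (fun z => g z ^ (-((d : ℝ) + 1))) z ≤
      D * ((d : ℝ) + 1) / (c * ((d : ℝ) + 1 - α)) * ε ^ (α - (d : ℝ) - 1) :=
  stmt_14_general d c D α hc hD hαd 𝒳 μ p hp_meas hμp hpc g hg_meas hmargin ε hε0
end
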